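/- Let {|ψ_x⟩, p(x)}_{x∈X} and {|φ_y⟩, q(y)}_{y∈Y} be two finite pure-state ensembles on system S (unit vectors with probability weights summing to 1), encoded as the classically-flagged beliefs β = Σ_x p(x)|ψ_x⟩⟨ψ_x|⊗|x⟩⟨x| on S⊗R₁ and γ = Σ_y q(y)|φ_y⟩⟨φ_y|⊗|y⟩⟨y| on S⊗R₂, where {|x⟩} and {|y⟩} are standard orthonormal bases of R₁ and R₂. Then β and γ are equivalent beliefs if and only if their second moments are equal: Σ_x p(x)|ψ_x⟩⟨ψ_x|⊗|ψ_x⟩⟨ψ_x| = Σ_y q(y)|φ_y⟩⟨φ_y|⊗|φ_y⟩⟨φ_y|. -/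

import Mathlib

open Matrix
open scoped Kronecker ComplexOrder


open Classical in
/-- The positive semidefinite square root of a matrix (zero if not PSD). -/
noncomputable def msqrt {n : Type*} [Fintype n] [DecidableEq n] (A : Matrix n n ℂ) :
    Matrix n n ℂ :=
  if h : A.PosSemidef then
    (h.1.eigenvectorUnitary : Matrix n n ℂ) *
      diagonal ((↑) ∘ (Real.sqrt ·) ∘ h.1.eigenvalues) *
      (star h.1.eigenvectorUnitary : Matrix n n ℂ)
  else 0

/-- `A^{-1/2}`: the (nonsingular) inverse of the PSD square root. -/
noncomputable def invsqrt {n : Type*} [Fintype n] [DecidableEq n] (A : Matrix n n ℂ) :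
    Matrix n n ℂ :=
  (msqrt A)⁻¹

/-- Partial trace over the second factor `R`. -/
noncomputable def ptraceR {S R : Type*} [Fintype R] (M : Matrix (S × R) (S × R) ℂ) : Matrix S S ℂ :=
  Matrix.of fun s s' => ∑ r, M (s, r) (s', r)

/-- A density matrix: positive semidefinite with unit trace. -/
def IsDensity {n : Type*} [Fintype n] (A : Matrix n n ℂ) : Prop :=
  A.PosSemidef ∧ A.trace = 1

/-- The Choi matrix of a linear map between matrix algebras. -/
def choi {S T : Type*} [Fintype S] [DecidableEq S]
    (E : Matrix S S ℂ →ₗ[ℂ] Matrix T T ℂ) : Matrix (S × T) (S × T) ℂ :=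
  Matrix.of fun p q => E (Matrix.single p.1 q.1 1) p.2 q.2

/-- Completely positive trace-preserving map. -/
def IsCPTP {S T : Type*} [Fintype S] [DecidableEq S] [Fintype T]
    (E : Matrix S S ℂ →ₗ[ℂ] Matrix T T ℂ) : Prop :=
  (∀ X, (E X).trace = X.trace) ∧ (choi E).PosSemidef

/-- The Hilbert-Schmidt adjoint `E†`, satisfying `Tr[E(X)† Y] = Tr[X† E†(Y)]`. -/
noncomputable def adjMap {S T : Type*} [Fintype S] [DecidableEq S] [Fintype T]
    (E : Matrix S S ℂ →ₗ[ℂ] Matrix T T ℂ) (Y : Matrix T T ℂ) : Matrix S S ℂ :=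
  Matrix.of fun i j => ((E (Matrix.single i j 1))ᴴ * Y).trace

/-- The original Petz map `R^{E,βS}(σ) = √βS E†(E(βS)^{-1/2} σ E(βS)^{-1/2}) √βS`. -/
noncomputable def petz {S T : Type*} [Fintype S] [DecidableEq S] [Fintype T] [DecidableEq T]
    (E : Matrix S S ℂ →ₗ[ℂ] Matrix T T ℂ) (βS : Matrix S S ℂ) (σ : Matrix T T ℂ) :
    Matrix S S ℂ :=
  msqrt βS * adjMap E (invsqrt (E βS) * σ * invsqrt (E βS)) * msqrt βS

/-- The prior-extended Petz map `R^{E⊗Tr,β}`. -/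
noncomputable def petzExt {S R T : Type*} [Fintype S] [DecidableEq S]
    [Fintype R] [DecidableEq R] [Fintype T] [DecidableEq T]
    (E : Matrix S S ℂ →ₗ[ℂ] Matrix T T ℂ) (β : Matrix (S × R) (S × R) ℂ)
    (σ : Matrix T T ℂ) : Matrix (S × R) (S × R) ℂ :=
  msqrt β *
    (adjMap E (invsqrt (E (ptraceR β)) * σ * invsqrt (E (ptraceR β))) ⊗ₖ (1 : Matrix R R ℂ)) *
    msqrt β

/-- The retrodiction map `R_ext^{E,β} = Tr_R ∘ R^{E⊗Tr,β}`. -/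
noncomputable def retroExt {S R T : Type*} [Fintype S] [DecidableEq S]
    [Fintype R] [DecidableEq R] [Fintype T] [DecidableEq T]
    (E : Matrix S S ℂ →ₗ[ℂ] Matrix T T ℂ) (β : Matrix (S × R) (S × R) ℂ)
    (σ : Matrix T T ℂ) : Matrix S S ℂ :=
  ptraceR (petzExt E β σ)

/-- Two beliefs are equivalent if they induce the same retrodiction map for all channels. -/
def EquivBeliefs {S R₁ R₂ : Type*} [Fintype S] [DecidableEq S]
    [Fintype R₁] [DecidableEq R₁] [Fintype R₂] [DecidableEq R₂]
    (β : Matrix (S × R₁) (S × R₁) ℂ) (γ : Matrix (S × R₂) (S × R₂) ℂ) : Prop :=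
  ∀ (T : Type) (_ : Fintype T) (_ : DecidableEq T)
    (E : Matrix S S ℂ →ₗ[ℂ] Matrix T T ℂ),
    IsCPTP E → (E (ptraceR β)).PosDef → (E (ptraceR γ)).PosDef →
    ∀ σ : Matrix T T ℂ, retroExt E β σ = retroExt E γ σ


/-!
For a flagged pure ensemble `β` with second moment `M`, the square root of `β` is again block
diagonal, and a direct computation gives `R_ext^{E,β}(σ) = Tr₂[M (1 ⊗ A)]` with
`A = E†(E(β_S)^{-1/2} σ E(β_S)^{-1/2})`; since also `β_S = Tr₂ M`, the retrodiction maps depend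
on the ensemble only through `M`.

Conversely, for a two-outcome measurement with effects `G, 1 - G` (both `≥ ε`) and `σ` the
projector on the first outcome, `A` is `G / Tr[G β_S]`. The effect `½ · 1` shows that equivalent
ensembles have the same marginal, and then the effects `½ · 1 + c |v⟩⟨v|` (`c` small) show that
`Tr₂[M (1 ⊗ |v⟩⟨v|)]` agrees for all `v`. Its `(i, j)` entry is the quadratic form at `v` of the
block `M_{(i,·),(j,·)}`, and a complex matrix is determined by its quadratic form.
-/

section MatrixFacts

variable {n : Type*} [Fintype n] [DecidableEq n]

open scoped MatrixOrder in
lemma msqrt_eq_of_mul_self_eq {A B : Matrix n n ℂ} (hA : A.PosSemidef) (hB : B.PosSemidef)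
    (h : B * B = A) : msqrt A = B := by
  have : msqrt A = CFC.sqrt A := by
    rw [msqrt, dif_pos hA, CFC.sqrt_eq_cfc, cfc_nnreal_eq_real _ A, hA.1.cfc_eq]
    simp [IsHermitian.cfc, Function.comp_def, hA.eigenvalues_nonneg]
  rw [this]
  exact CFC.sqrt_unique h hB.nonneg

lemma invsqrt_diagonal_mul_single_mul_invsqrt_diagonal {d : n → ℂ} (hd : ∀ i, 0 < d i) (i : n) :
    invsqrt (diagonal d) * single i i 1 * invsqrt (diagonal d) = (d i)⁻¹ • single i i 1 := by
  have hd' (j : n) : 0 < (d j).re ∧ ((d j).re : ℂ) = d j :=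
    ⟨(Complex.pos_iff.1 (hd j)).1, Complex.ext (by simp) (by simp [(Complex.pos_iff.1 (hd j)).2])⟩
  have hsqrt : msqrt (diagonal d) = diagonal fun j => ((√(d j).re : ℝ) : ℂ) := by
    refine msqrt_eq_of_mul_self_eq (posSemidef_diagonal_iff.2 fun j => (hd j).le)
      (posSemidef_diagonal_iff.2 fun j => by positivity) ?_
    rw [diagonal_mul_diagonal]
    congr 1; funext j
    rw [← Complex.ofReal_mul, Real.mul_self_sqrt (hd' j).1.le, (hd' j).2]
  have hinv : invsqrt (diagonal d) = diagonal fun j => (((√(d j).re)⁻¹ : ℝ) : ℂ) := by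
    rw [invsqrt, hsqrt]
    refine inv_eq_left_inv ?_
    rw [diagonal_mul_diagonal, ← diagonal_one]
    congr 1; funext j
    rw [← Complex.ofReal_mul, inv_mul_cancel₀ (Real.sqrt_pos.2 (hd' j).1).ne', Complex.ofReal_one]
  rw [hinv]
  ext k l
  simp only [diagonal_mul, mul_diagonal, single_apply, Matrix.smul_apply, smul_eq_mul]
  split_ifs with hkl
  · obtain ⟨rfl, rfl⟩ := hkl
    rw [mul_one, ← Complex.ofReal_mul, ← mul_inv, Real.mul_self_sqrt (hd' i).1.le,
      Complex.ofReal_inv, (hd' i).2, mul_one]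
  · simp

omit [Fintype n] in
lemma posSemidef_single_self_one (i : n) : (single i i (1 : ℂ)).PosSemidef := by
  rw [← diagonal_single]
  exact PosSemidef.diagonal (Pi.single_nonneg.2 zero_le_one)

lemma trace_mul_nonneg {A B : Matrix n n ℂ} (hA : A.PosSemidef) (hB : B.PosSemidef) :
    0 ≤ (A * B).trace := by
  open scoped MatrixOrder in
  obtain ⟨C, rfl⟩ := CStarAlgebra.nonneg_iff_eq_star_mul_self.mp hB.nonneg
  rw [← mul_assoc, trace_mul_comm, ← mul_assoc]
  exact (hA.mul_mul_conjTranspose_same C).trace_nonneg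

lemma IsDensity.trace_mul_pos {ρ H : Matrix n n ℂ} (hρ : IsDensity ρ) {ε : ℝ} (hε : 0 < ε)
    (hH : (H - (ε : ℂ) • 1).PosSemidef) : 0 < (H * ρ).trace := by
  have : (H * ρ).trace = ((H - (ε : ℂ) • 1) * ρ).trace + ε := by
    rw [sub_mul, trace_sub, smul_mul, one_mul, trace_smul, hρ.2, smul_eq_mul, mul_one,
      sub_add_cancel]
  rw [this]
  exact add_pos_of_nonneg_of_pos (trace_mul_nonneg hH hρ.1) (Complex.zero_lt_real.2 hε)

lemma eq_of_forall_star_dotProduct_mulVec_eq {A B : Matrix n n ℂ}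
    (h : ∀ v, star v ⬝ᵥ (A *ᵥ v) = star v ⬝ᵥ (B *ᵥ v)) : A = B := by
  refine (toLpLin 2 2).injective <| (ext_inner_map _ _).1 fun x => ?_
  have hstar (M : Matrix n n ℂ) :
      x.ofLp ⬝ᵥ star (M *ᵥ x.ofLp) = star (star x.ofLp ⬝ᵥ (M *ᵥ x.ofLp)) := by
    rw [← star_dotProduct_star, star_star, dotProduct_comm]
  simp only [EuclideanSpace.inner_eq_star_dotProduct, ofLp_toLpLin, toLin'_apply, hstar, h]

lemma posSemidef_normSq_smul_one_sub_vecMulVec (v : n → ℂ) :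
    (((∑ i, Complex.normSq (v i) : ℝ) : ℂ) • 1 - vecMulVec v (star v)).PosSemidef := by
  refine PosSemidef.of_dotProduct_mulVec_nonneg ?_ fun x => ?_
  · simp [IsHermitian, conjTranspose_vecMulVec]
  · have hv : ∑ i, Complex.normSq (v i) = ‖WithLp.toLp 2 v‖ ^ 2 := by
      simp [EuclideanSpace.norm_sq_eq, Complex.normSq_eq_norm_sq]
    have hx : star x ⬝ᵥ x = ((‖WithLp.toLp 2 x‖ ^ 2 : ℝ) : ℂ) := by
      simp [EuclideanSpace.norm_sq_eq, dotProduct, Complex.conj_mul']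
    have hvx : (star x ⬝ᵥ v) * (star v ⬝ᵥ x) = ((‖star v ⬝ᵥ x‖ ^ 2 : ℝ) : ℂ) := by
      rw [star_dotProduct, mul_comm, ← Complex.normSq_eq_norm_sq, ← Complex.mul_conj]
      rfl
    have hCS : ‖star v ⬝ᵥ x‖ ≤ ‖WithLp.toLp 2 v‖ * ‖WithLp.toLp 2 x‖ := by
      simpa [EuclideanSpace.inner_toLp_toLp, dotProduct_comm] using
        norm_inner_le_norm (𝕜 := ℂ) (WithLp.toLp 2 v) (WithLp.toLp 2 x)
    rw [sub_mulVec, smul_mulVec, one_mulVec, vecMulVec_mulVec, dotProduct_sub, dotProduct_smul,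
      dotProduct_smul, hx, hv, op_smul_eq_mul, hvx, smul_eq_mul, ← Complex.ofReal_mul,
      ← Complex.ofReal_sub, Complex.zero_le_real, sub_nonneg, ← mul_pow]
    exact pow_le_pow_left₀ (norm_nonneg _) hCS 2

end MatrixFacts

section MeasureChannel

variable {S T : Type*} [Fintype S] [DecidableEq S] [Fintype T] [DecidableEq T]

/-- Measure with the effects `Γ` and record the outcome classically. -/
noncomputable def measureChannel (Γ : T → Matrix S S ℂ) : Matrix S S ℂ →ₗ[ℂ] Matrix T T ℂ where
  toFun X := diagonal fun t => (Γ t * X).trace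
  map_add' X Y := by simp [mul_add]
  map_smul' c X := by ext; simp [diagonal_apply]

omit [Fintype T] in
lemma measureChannel_apply (Γ : T → Matrix S S ℂ) (X : Matrix S S ℂ) :
    measureChannel Γ X = diagonal fun t => (Γ t * X).trace := rfl

lemma choi_measureChannel (Γ : T → Matrix S S ℂ) :
    choi (measureChannel Γ) = ∑ t, (Γ t)ᵀ ⊗ₖ single t t 1 := by
  ext ⟨i, s⟩ ⟨j, s'⟩
  simp [choi, measureChannel_apply, diagonal_apply, trace_mul_single, Matrix.sum_apply,
    single_apply, ite_and]

lemma isCPTP_measureChannel {Γ : T → Matrix S S ℂ} (hΓ : ∀ t, (Γ t).PosSemidef)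
    (hsum : ∑ t, Γ t = 1) : IsCPTP (measureChannel Γ) := by
  refine ⟨fun X => ?_, ?_⟩
  · rw [measureChannel_apply, trace_diagonal, ← trace_sum, ← Finset.sum_mul, hsum, one_mul]
  · rw [choi_measureChannel]
    exact posSemidef_sum _ fun t _ => (hΓ t).transpose.kronecker (posSemidef_single_self_one t)

lemma adjMap_measureChannel {Γ : T → Matrix S S ℂ} (hΓ : ∀ t, (Γ t).IsHermitian)
    (Y : Matrix T T ℂ) : adjMap (measureChannel Γ) Y = ∑ t, Y t t • Γ t := by
  ext i j
  have hΓij (t : T) : star (Γ t j i) = Γ t i j := (hΓ t).apply i j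
  simp only [adjMap, of_apply, measureChannel_apply, trace_mul_single, diagonal_conjTranspose,
    Matrix.sum_apply, Matrix.smul_apply]
  simp [trace, diagonal_mul, hΓij, mul_comm]

lemma adjMap_measureChannel_sandwich {Γ : T → Matrix S S ℂ} (hΓ : ∀ t, (Γ t).IsHermitian)
    {ρ : Matrix S S ℂ} (hρ : ∀ t, 0 < (Γ t * ρ).trace) (t : T) :
    adjMap (measureChannel Γ)
        (invsqrt (measureChannel Γ ρ) * single t t 1 * invsqrt (measureChannel Γ ρ)) =
      ((Γ t * ρ).trace)⁻¹ • Γ t := by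
  rw [measureChannel_apply, invsqrt_diagonal_mul_single_mul_invsqrt_diagonal hρ,
    adjMap_measureChannel hΓ]
  simp [single_apply]

end MeasureChannel

noncomputable def partialPairing {S : Type*} [Fintype S] [DecidableEq S]
    (M : Matrix (S × S) (S × S) ℂ) : Matrix S S ℂ →ₗ[ℂ] Matrix S S ℂ where
  toFun A := ptraceR (M * (1 ⊗ₖ A))
  map_add' A B := by
    ext i j
    simp [ptraceR, kronecker_add, mul_add, Finset.sum_add_distrib]
  map_smul' c A := by
    ext i j
    simp [ptraceR, kronecker_smul, Finset.mul_sum]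

section PartialPairing

variable {S : Type*} [Fintype S] [DecidableEq S]

lemma partialPairing_apply (M : Matrix (S × S) (S × S) ℂ) (A : Matrix S S ℂ) :
    partialPairing M A = ptraceR (M * (1 ⊗ₖ A)) := rfl

lemma partialPairing_one (M : Matrix (S × S) (S × S) ℂ) : partialPairing M 1 = ptraceR M := by
  rw [partialPairing_apply, one_kronecker_one, mul_one]

lemma partialPairing_vecMulVec_apply (M : Matrix (S × S) (S × S) ℂ) (v : S → ℂ) (i j : S) :
    partialPairing M (vecMulVec v (star v)) i j =
      star v ⬝ᵥ (M.submatrix (i, ·) (j, ·) *ᵥ v) := by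
  simp [partialPairing_apply, ptraceR, mul_apply, Fintype.sum_prod_type, one_apply, dotProduct,
    mulVec, Finset.mul_sum, vecMulVec_apply]
  exact Finset.sum_congr rfl fun _ _ => Finset.sum_congr rfl fun _ _ => by ring

lemma eq_of_forall_partialPairing_vecMulVec_eq {M M' : Matrix (S × S) (S × S) ℂ}
    (h : ∀ v : S → ℂ, partialPairing M (vecMulVec v (star v)) =
      partialPairing M' (vecMulVec v (star v))) : M = M' := by
  ext ⟨i, k⟩ ⟨j, l⟩
  have hij : M.submatrix (i, ·) (j, ·) = M'.submatrix (i, ·) (j, ·) :=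
    eq_of_forall_star_dotProduct_mulVec_eq fun v => by
      rw [← partialPairing_vecMulVec_apply, ← partialPairing_vecMulVec_apply, h]
  exact congrFun (congrFun hij k) l

end PartialPairing

section Ensemble

variable {S X : Type*} [Fintype S] [DecidableEq S] [Fintype X] [DecidableEq X]

noncomputable def flaggedEnsemble (ψ : X → S → ℂ) (p : X → ℝ) : Matrix (S × X) (S × X) ℂ :=
  ∑ x, (p x : ℂ) • (vecMulVec (ψ x) (star (ψ x)) ⊗ₖ single x x 1)

noncomputable def secondMoment (ψ : X → S → ℂ) (p : X → ℝ) : Matrix (S × S) (S × S) ℂ :=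
  ∑ x, (p x : ℂ) • (vecMulVec (ψ x) (star (ψ x)) ⊗ₖ vecMulVec (ψ x) (star (ψ x)))

omit [DecidableEq S] in
lemma star_dotProduct_self_of_sum_normSq_eq_one {v : S → ℂ}
    (hv : ∑ i, Complex.normSq (v i) = 1) : star v ⬝ᵥ v = 1 := by
  calc star v ⬝ᵥ v = ((∑ i, Complex.normSq (v i) : ℝ) : ℂ) := by
        simp [dotProduct, Complex.conj_mul', Complex.normSq_eq_norm_sq]
    _ = 1 := by rw [hv, Complex.ofReal_one]

omit [Fintype S] [DecidableEq S] [DecidableEq X] in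
lemma ptraceR_sum_smul_kronecker {R : Type*} [Fintype R] (c : X → ℂ) (A : X → Matrix S S ℂ)
    (B : X → Matrix R R ℂ) :
    ptraceR (∑ x, c x • (A x ⊗ₖ B x)) = ∑ x, (c x * (B x).trace) • A x := by
  ext i j
  simp only [ptraceR, of_apply, Matrix.sum_apply, Matrix.smul_apply, kroneckerMap_apply,
    smul_eq_mul, trace, diag_apply, Finset.mul_sum, Finset.sum_mul]
  rw [Finset.sum_comm]
  exact Finset.sum_congr rfl fun _ _ => Finset.sum_congr rfl fun _ _ => by ring

omit [Fintype S] [DecidableEq S] in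
lemma ptraceR_flaggedEnsemble (ψ : X → S → ℂ) (p : X → ℝ) :
    ptraceR (flaggedEnsemble ψ p) = ∑ x, (p x : ℂ) • vecMulVec (ψ x) (star (ψ x)) := by
  rw [flaggedEnsemble, ptraceR_sum_smul_kronecker]
  simp

omit [DecidableEq S] [DecidableEq X] in
lemma ptraceR_secondMoment {ψ : X → S → ℂ} (hψ : ∀ x, ∑ i, Complex.normSq (ψ x i) = 1)
    (p : X → ℝ) :
    ptraceR (secondMoment ψ p) = ∑ x, (p x : ℂ) • vecMulVec (ψ x) (star (ψ x)) := by
  rw [secondMoment, ptraceR_sum_smul_kronecker]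
  simp [dotProduct_comm (ψ _), star_dotProduct_self_of_sum_normSq_eq_one (hψ _)]

omit [DecidableEq S] in
lemma isDensity_ptraceR_flaggedEnsemble {ψ : X → S → ℂ} {p : X → ℝ}
    (hψ : ∀ x, ∑ i, Complex.normSq (ψ x i) = 1) (hp : ∀ x, 0 ≤ p x) (hp1 : ∑ x, p x = 1) :
    IsDensity (ptraceR (flaggedEnsemble ψ p)) := by
  rw [ptraceR_flaggedEnsemble]
  refine ⟨posSemidef_sum _ fun x _ =>
    (posSemidef_vecMulVec_self_star (ψ x)).smul (Complex.zero_le_real.2 (hp x)), ?_⟩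
  simp [trace_sum, dotProduct_comm (ψ _), star_dotProduct_self_of_sum_normSq_eq_one (hψ _),
    ← Complex.ofReal_sum, hp1]

lemma sum_smul_kronecker_single_mul_sum_smul_kronecker_single (c d : X → ℂ)
    (A B : X → Matrix S S ℂ) :
    (∑ x, c x • (A x ⊗ₖ single x x (1 : ℂ))) * (∑ x, d x • (B x ⊗ₖ single x x (1 : ℂ))) =
      ∑ x, (c x * d x) • ((A x * B x) ⊗ₖ single x x (1 : ℂ)) := by
  simp only [Finset.sum_mul, Finset.mul_sum, smul_mul_smul_comm, ← mul_kronecker_mul]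
  refine Finset.sum_congr rfl fun x _ => ?_
  rw [Finset.sum_eq_single x (fun y _ hyx => by
      rw [single_mul_single_of_ne (h := hyx), kronecker_zero, smul_zero]) (by simp),
    single_mul_single_same, mul_one]

lemma sum_smul_kronecker_single_mul_kronecker_one (c : X → ℂ) (A : X → Matrix S S ℂ)
    (M : Matrix S S ℂ) :
    (∑ x, c x • (A x ⊗ₖ single x x (1 : ℂ))) * (M ⊗ₖ (1 : Matrix X X ℂ)) =
      ∑ x, c x • ((A x * M) ⊗ₖ single x x (1 : ℂ)) := by
  simp only [Finset.sum_mul, smul_mul_assoc, ← mul_kronecker_mul, mul_one]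

lemma msqrt_flaggedEnsemble {ψ : X → S → ℂ} {p : X → ℝ}
    (hψ : ∀ x, ∑ i, Complex.normSq (ψ x i) = 1) (hp : ∀ x, 0 ≤ p x) :
    msqrt (flaggedEnsemble ψ p) =
      ∑ x, ((√(p x) : ℝ) : ℂ) • (vecMulVec (ψ x) (star (ψ x)) ⊗ₖ single x x 1) := by
  have hpsd (c : X → ℝ) (hc : ∀ x, 0 ≤ c x) :
      (∑ x, (c x : ℂ) • (vecMulVec (ψ x) (star (ψ x)) ⊗ₖ single x x (1 : ℂ))).PosSemidef := by
    refine posSemidef_sum _ fun x _ => PosSemidef.smul ?_ (Complex.zero_le_real.2 (hc x))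
    exact (posSemidef_vecMulVec_self_star _).kronecker (posSemidef_single_self_one x)
  refine msqrt_eq_of_mul_self_eq (hpsd p hp) (hpsd _ fun x => Real.sqrt_nonneg _) ?_
  rw [sum_smul_kronecker_single_mul_sum_smul_kronecker_single, flaggedEnsemble]
  refine Finset.sum_congr rfl fun x _ => ?_
  rw [vecMulVec_mul_vecMulVec, star_dotProduct_self_of_sum_normSq_eq_one (hψ x), one_smul,
    ← Complex.ofReal_mul, Real.mul_self_sqrt (hp x)]

omit [DecidableEq X] in
lemma partialPairing_secondMoment (ψ : X → S → ℂ) (p : X → ℝ) (A : Matrix S S ℂ) :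
    partialPairing (secondMoment ψ p) A =
      ∑ x, ((p x : ℂ) * (star (ψ x) ⬝ᵥ (A *ᵥ ψ x))) • vecMulVec (ψ x) (star (ψ x)) := by
  simp only [partialPairing_apply, secondMoment, Finset.sum_mul, smul_mul_assoc,
    ← mul_kronecker_mul, mul_one]
  rw [ptraceR_sum_smul_kronecker]
  simp [vecMulVec_mul, dotProduct_mulVec, dotProduct_comm (ψ _)]

lemma retroExt_flaggedEnsemble {T : Type*} [Fintype T] [DecidableEq T] {ψ : X → S → ℂ}
    {p : X → ℝ} (hψ : ∀ x, ∑ i, Complex.normSq (ψ x i) = 1) (hp : ∀ x, 0 ≤ p x)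
    (E : Matrix S S ℂ →ₗ[ℂ] Matrix T T ℂ) (σ : Matrix T T ℂ) :
    retroExt E (flaggedEnsemble ψ p) σ =
      partialPairing (secondMoment ψ p) (adjMap E (invsqrt (E (ptraceR (flaggedEnsemble ψ p))) *
        σ * invsqrt (E (ptraceR (flaggedEnsemble ψ p))))) := by
  rw [retroExt, petzExt, msqrt_flaggedEnsemble hψ hp, sum_smul_kronecker_single_mul_kronecker_one,
    sum_smul_kronecker_single_mul_sum_smul_kronecker_single, ptraceR_sum_smul_kronecker,
    partialPairing_secondMoment]
  refine Finset.sum_congr rfl fun x _ => ?_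
  rw [vecMulVec_mul, vecMulVec_mul_vecMulVec, vecMulVec_smul, trace_single_eq_same, mul_one,
    smul_smul, ← Complex.ofReal_mul, Real.mul_self_sqrt (hp x), ← dotProduct_mulVec]

end Ensemble

section Equivalence

variable {S X Y : Type*} [Fintype S] [DecidableEq S] [Fintype X] [DecidableEq X]
  [Fintype Y] [DecidableEq Y] {ψ : X → S → ℂ} {φ : Y → S → ℂ} {p : X → ℝ} {q : Y → ℝ}

lemma equivBeliefs_flaggedEnsemble_of_secondMoment_eq
    (hψ : ∀ x, ∑ i, Complex.normSq (ψ x i) = 1) (hφ : ∀ y, ∑ i, Complex.normSq (φ y i) = 1)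
    (hp : ∀ x, 0 ≤ p x) (hq : ∀ y, 0 ≤ q y) (h : secondMoment ψ p = secondMoment φ q) :
    EquivBeliefs (flaggedEnsemble ψ p) (flaggedEnsemble φ q) := by
  have hρ : ptraceR (flaggedEnsemble ψ p) = ptraceR (flaggedEnsemble φ q) := by
    rw [ptraceR_flaggedEnsemble, ptraceR_flaggedEnsemble, ← ptraceR_secondMoment hψ,
      ← ptraceR_secondMoment hφ, h]
  intro T _ _ E _ _ _ σ
  rw [retroExt_flaggedEnsemble hψ hp, retroExt_flaggedEnsemble hφ hq, hρ, h]

lemma EquivBeliefs.partialPairing_secondMoment_eq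
    (h : EquivBeliefs (flaggedEnsemble ψ p) (flaggedEnsemble φ q))
    (hψ : ∀ x, ∑ i, Complex.normSq (ψ x i) = 1) (hφ : ∀ y, ∑ i, Complex.normSq (φ y i) = 1)
    (hp : ∀ x, 0 ≤ p x) (hq : ∀ y, 0 ≤ q y) (hp1 : ∑ x, p x = 1) (hq1 : ∑ y, q y = 1)
    {ε : ℝ} (hε : 0 < ε) {G : Matrix S S ℂ} (h₀ : (G - (ε : ℂ) • 1).PosSemidef)
    (h₁ : (1 - G - (ε : ℂ) • 1).PosSemidef) :
    partialPairing (secondMoment ψ p) ((G * ptraceR (flaggedEnsemble ψ p)).trace⁻¹ • G) =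
      partialPairing (secondMoment φ q) ((G * ptraceR (flaggedEnsemble φ q)).trace⁻¹ • G) := by
  set Γ : Bool → Matrix S S ℂ := fun b => bif b then G else 1 - G
  have hΓε (b : Bool) : (Γ b - (ε : ℂ) • 1).PosSemidef := by cases b; exacts [h₁, h₀]
  have hΓ (b : Bool) : (Γ b).PosSemidef := by
    simpa using (hΓε b).add (PosSemidef.one.smul (Complex.zero_le_real.2 hε.le))
  have hpos {ρ : Matrix S S ℂ} (hρ : IsDensity ρ) (b : Bool) : 0 < (Γ b * ρ).trace :=
    hρ.trace_mul_pos hε (hΓε b)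
  have hβ := hpos (isDensity_ptraceR_flaggedEnsemble hψ hp hp1)
  have hγ := hpos (isDensity_ptraceR_flaggedEnsemble hφ hq hq1)
  have := h Bool inferInstance inferInstance (measureChannel Γ)
    (isCPTP_measureChannel hΓ (by simp [Γ])) (posDef_diagonal_iff.2 hβ)
    (posDef_diagonal_iff.2 hγ) (single true true 1)
  rwa [retroExt_flaggedEnsemble hψ hp, retroExt_flaggedEnsemble hφ hq,
    adjMap_measureChannel_sandwich (fun b => (hΓ b).1) hβ,
    adjMap_measureChannel_sandwich (fun b => (hΓ b).1) hγ] at this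

lemma EquivBeliefs.ptraceR_eq (h : EquivBeliefs (flaggedEnsemble ψ p) (flaggedEnsemble φ q))
    (hψ : ∀ x, ∑ i, Complex.normSq (ψ x i) = 1) (hφ : ∀ y, ∑ i, Complex.normSq (φ y i) = 1)
    (hp : ∀ x, 0 ≤ p x) (hq : ∀ y, 0 ≤ q y) (hp1 : ∑ x, p x = 1) (hq1 : ∑ y, q y = 1) :
    ptraceR (flaggedEnsemble ψ p) = ptraceR (flaggedEnsemble φ q) := by
  set G : Matrix S S ℂ := ((2⁻¹ : ℝ) : ℂ) • 1
  have hunit {ρ : Matrix S S ℂ} (hρ : IsDensity ρ) : (G * ρ).trace⁻¹ • G = 1 := by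
    rw [smul_mul, one_mul, trace_smul, hρ.2, smul_eq_mul, mul_one, smul_smul,
      inv_mul_cancel₀ (by norm_num), one_smul]
  have hhalf : 1 - G - ((2⁻¹ : ℝ) : ℂ) • 1 = 0 := by
    rw [sub_sub, ← add_smul]; norm_num
  have := h.partialPairing_secondMoment_eq hψ hφ hp hq hp1 hq1 (by norm_num : (0 : ℝ) < 2⁻¹)
    (by rw [sub_self]; exact .zero) (by rw [hhalf]; exact .zero)
  rwa [hunit (isDensity_ptraceR_flaggedEnsemble hψ hp hp1),
    hunit (isDensity_ptraceR_flaggedEnsemble hφ hq hq1), partialPairing_one, partialPairing_one,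
    ptraceR_secondMoment hψ, ptraceR_secondMoment hφ, ← ptraceR_flaggedEnsemble,
    ← ptraceR_flaggedEnsemble] at this

lemma EquivBeliefs.secondMoment_eq
    (h : EquivBeliefs (flaggedEnsemble ψ p) (flaggedEnsemble φ q))
    (hψ : ∀ x, ∑ i, Complex.normSq (ψ x i) = 1) (hφ : ∀ y, ∑ i, Complex.normSq (φ y i) = 1)
    (hp : ∀ x, 0 ≤ p x) (hq : ∀ y, 0 ≤ q y) (hp1 : ∑ x, p x = 1) (hq1 : ∑ y, q y = 1) :
    secondMoment ψ p = secondMoment φ q := by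
  have hρ := h.ptraceR_eq hψ hφ hp hq hp1 hq1
  refine eq_of_forall_partialPairing_vecMulVec_eq fun v => ?_
  set P := vecMulVec v (star v)
  set nv := ∑ i, Complex.normSq (v i)
  set c : ℝ := (4 * (1 + nv))⁻¹
  have hnv : 0 ≤ nv := Finset.sum_nonneg fun i _ => Complex.normSq_nonneg _
  have hc : 0 < c := by positivity
  have hcnv : c * nv ≤ 4⁻¹ := by
    rw [inv_mul_le_iff₀ (by positivity)]; linarith
  set G : Matrix S S ℂ := ((2⁻¹ : ℝ) : ℂ) • 1 + (c : ℂ) • P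
  have h₀ : (G - ((4⁻¹ : ℝ) : ℂ) • 1).PosSemidef := by
    have : G - ((4⁻¹ : ℝ) : ℂ) • 1 = ((4⁻¹ : ℝ) : ℂ) • 1 + (c : ℂ) • P := by
      simp only [G]; push_cast; module
    rw [this]
    exact (PosSemidef.one.smul (Complex.zero_le_real.2 (by norm_num))).add
      ((posSemidef_vecMulVec_self_star v).smul (Complex.zero_le_real.2 hc.le))
  have h₁ : (1 - G - ((4⁻¹ : ℝ) : ℂ) • 1).PosSemidef := by
    have : 1 - G - ((4⁻¹ : ℝ) : ℂ) • 1 =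
        ((4⁻¹ - c * nv : ℝ) : ℂ) • 1 + (c : ℂ) • ((nv : ℂ) • 1 - P) := by
      simp only [G]; push_cast; module
    rw [this]
    exact (PosSemidef.one.smul (Complex.zero_le_real.2 (by linarith))).add
      ((posSemidef_normSq_smul_one_sub_vecMulVec v).smul (Complex.zero_le_real.2 hc.le))
  have hτ : (G * ptraceR (flaggedEnsemble ψ p)).trace⁻¹ ≠ 0 :=
    inv_ne_zero ((isDensity_ptraceR_flaggedEnsemble hψ hp hp1).trace_mul_pos
      (by norm_num) h₀).ne'
  have := h.partialPairing_secondMoment_eq hψ hφ hp hq hp1 hq1 (by norm_num) h₀ h₁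
  rw [← hρ, map_smul, map_smul, smul_right_injective _ hτ |>.eq_iff] at this
  have hM : ptraceR (secondMoment ψ p) = ptraceR (secondMoment φ q) := by
    rw [ptraceR_secondMoment hψ, ptraceR_secondMoment hφ, ← ptraceR_flaggedEnsemble,
      ← ptraceR_flaggedEnsemble, hρ]
  rw [map_add, map_add, map_smul, map_smul, map_smul, map_smul, partialPairing_one,
    partialPairing_one, hM, add_right_inj] at this
  exact smul_right_injective _ (Complex.ofReal_ne_zero.2 hc.ne') this

end Equivalence

/-- Two pure-state ensembles are equivalent beliefs iff their
second moments coincide. -/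
theorem pure_ensembles_equiv_iff_second_moments
    {S X Y : Type*} [Fintype S] [DecidableEq S]
    [Fintype X] [DecidableEq X] [Fintype Y] [DecidableEq Y]
    (ψ : X → S → ℂ) (φ : Y → S → ℂ) (p : X → ℝ) (q : Y → ℝ)
    (hψ : ∀ x, ∑ i, Complex.normSq (ψ x i) = 1)
    (hφ : ∀ y, ∑ i, Complex.normSq (φ y i) = 1)
    (hp : ∀ x, 0 ≤ p x) (hq : ∀ y, 0 ≤ q y)
    (hp1 : ∑ x, p x = 1) (hq1 : ∑ y, q y = 1) :
    EquivBeliefs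
      (∑ x, (p x : ℂ) •
        (Matrix.vecMulVec (ψ x) (star (ψ x)) ⊗ₖ Matrix.single x x (1 : ℂ)))
      (∑ y, (q y : ℂ) •
        (Matrix.vecMulVec (φ y) (star (φ y)) ⊗ₖ Matrix.single y y (1 : ℂ))) ↔
    (∑ x, (p x : ℂ) •
        (Matrix.vecMulVec (ψ x) (star (ψ x)) ⊗ₖ Matrix.vecMulVec (ψ x) (star (ψ x)))) =
      ∑ y, (q y : ℂ) •
        (Matrix.vecMulVec (φ y) (star (φ y)) ⊗ₖ Matrix.vecMulVec (φ y) (star (φ y))) := by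
  show EquivBeliefs (flaggedEnsemble ψ p) (flaggedEnsemble φ q) ↔
    secondMoment ψ p = secondMoment φ q
  exact ⟨fun h => h.secondMoment_eq hψ hφ hp hq hp1 hq1,
    equivBeliefs_flaggedEnsemble_of_secondMoment_eq hψ hφ hp hq⟩
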